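/- arXiv:1911.05624 — 3 statements merged into one kernel-verified Lean document; each statement's English description precedes it below -/
import Mathlib

section
/- Let p* ∈ (0, 1), L > 0, δ_MIN > 0, t_1 > 0, V_MAX ≥ L(1 − p*)/(p*·δ_MIN), and let k_0 be a positive integer. Let (Δ_i) be a sequence of positive reals with Δ_i ≤ Δ_MAX for some constant Δ_MAX and Δ_i = L/V_MAX for all i ≥ k_0, and let (δ_j) be a sequence of reals with δ_j ≥ δ_MIN for all j. Define p_k = (Σ_{i=1}^k Δ_i)/(t_1 + Σ_{i=1}^k (Δ_i + δ_i)). Then limsup_{k→∞} p_k ≤ p*. -/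
open Filter Finset Topology

/-! Once every crossing takes the same time `D = L / V_MAX`, the mean crossing time
`S_k / k` with `S_k = Σ_{i<k} Δ_i` tends to `D` (Cesàro), while every gap is at least `δ_MIN`.
Since `x ↦ x / (c + x)` is increasing, `p_k ≤ S_k / (t₁ + S_k + k δ_MIN)`, and the right-hand
side tends to `D / (D + δ_MIN)`. The speed condition on `V_MAX` is exactly `D / (D + δ_MIN) ≤ p*`. -/

/-- The coverage ratio `p(t_{2k+1})`, with the crossings and gaps indexed from `0`. -/
noncomputable def coverageRatio (t₁ : ℝ) (Δ δ : ℕ → ℝ) (k : ℕ) : ℝ :=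
  (∑ i ∈ range k, Δ i) / (t₁ + ∑ i ∈ range k, (Δ i + δ i))

section

variable {t₁ c : ℝ} {Δ δ : ℕ → ℝ}

theorem coverageRatio_nonneg (ht₁ : 0 ≤ t₁) (hΔ : ∀ i, 0 ≤ Δ i) (hδ : ∀ i, 0 ≤ δ i) (k : ℕ) :
    0 ≤ coverageRatio t₁ Δ δ k :=
  div_nonneg (sum_nonneg fun i _ => hΔ i)
    (add_nonneg ht₁ (sum_nonneg fun i _ => add_nonneg (hΔ i) (hδ i)))

theorem coverageRatio_le_of_le_gap (ht₁ : 0 < t₁) (hc : 0 ≤ c) (hΔ : ∀ i, 0 ≤ Δ i)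
    (hδ : ∀ i, c ≤ δ i) (k : ℕ) :
    coverageRatio t₁ Δ δ k ≤ (∑ i ∈ range k, Δ i) / (t₁ + ∑ i ∈ range k, Δ i + k * c) := by
  have hS : 0 ≤ ∑ i ∈ range k, Δ i := sum_nonneg fun i _ => hΔ i
  have hgaps : (k : ℝ) * c ≤ ∑ i ∈ range k, δ i := by
    simpa [mul_comm] using sum_le_sum fun i (_ : i ∈ range k) => hδ i
  refine div_le_div_of_nonneg_left hS (by positivity) ?_
  rw [sum_add_distrib]
  linarith

theorem tendsto_div_const_add_self_add_nat_mul {S : ℕ → ℝ} {D : ℝ} (t : ℝ) (hc : D + c ≠ 0)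
    (hS : Tendsto (fun k : ℕ => S k / k) atTop (𝓝 D)) :
    Tendsto (fun k : ℕ => S k / (t + S k + k * c)) atTop (𝓝 (D / (D + c))) := by
  have hden : Tendsto (fun k : ℕ => t / k + S k / k + c) atTop (𝓝 (0 + D + c)) :=
    ((tendsto_const_div_atTop_nhds_zero_nat t).add hS).add_const c
  rw [zero_add] at hden
  refine (hS.div hden hc).congr' ?_
  filter_upwards [eventually_ne_atTop 0] with k hk
  have hk : (k : ℝ) ≠ 0 := Nat.cast_ne_zero.mpr hk
  simp only [Pi.div_apply]
  field_simp

theorem limsup_coverageRatio_le (ht₁ : 0 < t₁) (hc : 0 < c) {D : ℝ} {k₀ : ℕ}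
    (hΔ : ∀ i, 0 ≤ Δ i) (hΔeq : ∀ i, k₀ ≤ i → Δ i = D) (hδ : ∀ i, c ≤ δ i) :
    limsup (coverageRatio t₁ Δ δ) atTop ≤ D / (D + c) := by
  have hD : 0 ≤ D := hΔeq k₀ le_rfl ▸ hΔ k₀
  have hmean : Tendsto (fun k : ℕ => (∑ i ∈ range k, Δ i) / k) atTop (𝓝 D) := by
    have hΔlim : Tendsto Δ atTop (𝓝 D) :=
      tendsto_const_nhds.congr' (eventually_atTop.mpr ⟨k₀, fun i hi => (hΔeq i hi).symm⟩)
    simpa only [inv_mul_eq_div] using hΔlim.cesaro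
  have hbound := tendsto_div_const_add_self_add_nat_mul t₁ (by positivity : D + c ≠ 0) hmean
  calc limsup (coverageRatio t₁ Δ δ) atTop
      ≤ limsup (fun k : ℕ => (∑ i ∈ range k, Δ i) / (t₁ + ∑ i ∈ range k, Δ i + k * c)) atTop :=
        limsup_le_limsup (Eventually.of_forall (coverageRatio_le_of_le_gap ht₁ hc.le hΔ hδ))
          (isCoboundedUnder_le_of_le atTop
            (coverageRatio_nonneg ht₁.le hΔ fun i => hc.le.trans (hδ i)))
          hbound.isBoundedUnder_le
    _ = D / (D + c) := hbound.limsup_eq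

end

theorem div_div_add_le_of_div_mul_le {p L δ V : ℝ} (hp : 0 < p) (hδ : 0 < δ) (hV : 0 < V)
    (hL : 0 ≤ L) (hVge : V ≥ L * (1 - p) / (p * δ)) :
    L / V / (L / V + δ) ≤ p := by
  rw [ge_iff_le, div_le_iff₀ (by positivity)] at hVge
  rw [div_le_iff₀ (by positivity), ← sub_nonneg]
  have : L / V * (1 - p) ≤ p * δ := by
    rw [div_mul_eq_mul_div, div_le_iff₀ hV]
    linarith
  linarith

theorem limsup_coverage_le_of_eventually_max_speed_general
    (pstar L δMIN t1 VMAX : ℝ) (k0 : ℕ)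
    (hp : pstar ∈ Set.Ioo (0 : ℝ) 1) (hL : 0 < L) (hδMIN : 0 < δMIN)
    (ht1 : 0 < t1) (hVpos : 0 < VMAX)
    (hV : VMAX ≥ L * (1 - pstar) / (pstar * δMIN))
    (Δ : ℕ → ℝ) (hΔpos : ∀ i, 0 < Δ i)
    (hΔeq : ∀ i, k0 ≤ i → Δ i = L / VMAX)
    (δ : ℕ → ℝ) (hδ : ∀ j, δMIN ≤ δ j) :
    limsup
        (fun k : ℕ =>
          (∑ i ∈ Finset.range k, Δ i) /
            (t1 + ∑ i ∈ Finset.range k, (Δ i + δ i)))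
        atTop ≤ pstar :=
  (limsup_coverageRatio_le ht1 hδMIN (fun i => (hΔpos i).le) hΔeq hδ).trans
    (div_div_add_le_of_div_mul_le hp.1 hδMIN hVpos hL.le hV)

/-- If the crossing times `Δ_i` are positive, bounded by `Δ_MAX`,
and equal to `L/V_MAX` from index `k₀` onward, with `V_MAX ≥ L(1−p*)/(p*·δ_MIN)`
and gaps `δ_j ≥ δ_MIN`, then the coverage ratios
`p_k = (Σ_{i<k} Δ_i)/(t₁ + Σ_{i<k} (Δ_i + δ_i))` satisfy `limsup p_k ≤ p*`. -/
theorem limsup_coverage_le_of_eventually_max_speed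
    (pstar L δMIN t1 VMAX ΔMAX : ℝ) (k0 : ℕ)
    (hp : pstar ∈ Set.Ioo (0 : ℝ) 1) (hL : 0 < L) (hδMIN : 0 < δMIN)
    (ht1 : 0 < t1) (hVpos : 0 < VMAX) (hk0 : 0 < k0)
    (hV : VMAX ≥ L * (1 - pstar) / (pstar * δMIN))
    (Δ : ℕ → ℝ) (hΔpos : ∀ i, 0 < Δ i) (hΔle : ∀ i, Δ i ≤ ΔMAX)
    (hΔeq : ∀ i, k0 ≤ i → Δ i = L / VMAX)
    (δ : ℕ → ℝ) (hδ : ∀ j, δMIN ≤ δ j) :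
    limsup
        (fun k : ℕ =>
          (∑ i ∈ Finset.range k, Δ i) /
            (t1 + ∑ i ∈ Finset.range k, (Δ i + δ i)))
        atTop ≤ pstar :=
  limsup_coverage_le_of_eventually_max_speed_general pstar L δMIN t1 VMAX k0 hp hL hδMIN ht1 hVpos
    hV Δ hΔpos hΔeq δ hδ
end

section
/- Let p* ∈ (0, 1), L > 0, δ_MAX > 0, t_1 > 0, 0 < V_MIN ≤ L(1 − p*)/(p*·δ_MAX), and let k_0 be a positive integer. Let (Δ_i) be a sequence of positive reals bounded above with Δ_i = L/V_MIN for all i ≥ k_0, and let (δ_j) satisfy 0 < δ_j ≤ δ_MAX for all j. Define p_k = (Σ_{i=1}^k Δ_i)/(t_1 + Σ_{i=1}^k (Δ_i + δ_i)). Then exactly one of the following holds: either lim_{k→∞} p_k = p*, or limsup_{k→∞} p_k > p*. -/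
open Filter

/-- Under the hypotheses guaranteeing `liminf p_k ≥ p*` (eventually
minimum-speed crossings), exactly one of the following holds: either
`lim p_k = p*`, or `limsup p_k > p*`. -/
theorem coverage_dichotomy_min_speed
    (pstar L δMAX t1 VMIN : ℝ) (k0 : ℕ)
    (hp : pstar ∈ Set.Ioo (0 : ℝ) 1) (hL : 0 < L) (hδMAX : 0 < δMAX)
    (ht1 : 0 < t1) (hVpos : 0 < VMIN) (hk0 : 0 < k0)
    (hV : VMIN ≤ L * (1 - pstar) / (pstar * δMAX))
    (Δ : ℕ → ℝ) (hΔpos : ∀ i, 0 < Δ i) (hΔbdd : ∃ ΔMAX : ℝ, ∀ i, Δ i ≤ ΔMAX)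
    (hΔeq : ∀ i, k0 ≤ i → Δ i = L / VMIN)
    (δ : ℕ → ℝ) (hδpos : ∀ j, 0 < δ j) (hδ : ∀ j, δ j ≤ δMAX) :
    Xor'
      (Tendsto
        (fun k : ℕ =>
          (∑ i ∈ Finset.range k, Δ i) /
            (t1 + ∑ i ∈ Finset.range k, (Δ i + δ i)))
        atTop (nhds pstar))
      (limsup
        (fun k : ℕ =>
          (∑ i ∈ Finset.range k, Δ i) /
            (t1 + ∑ i ∈ Finset.range k, (Δ i + δ i)))
        atTop > pstar) := by
  
  obtain ⟨hp0, hp1⟩ := hp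
  set f : ℕ → ℝ := fun k =>
      (∑ i ∈ Finset.range k, Δ i) /
        (t1 + ∑ i ∈ Finset.range k, (Δ i + δ i)) with hfdef
  set D : ℕ → ℝ := fun k => t1 + ∑ i ∈ Finset.range k, (Δ i + δ i) with hDdef
  have hSnn : ∀ k, (0:ℝ) ≤ ∑ i ∈ Finset.range k, Δ i :=
    fun k => Finset.sum_nonneg fun i _ => (hΔpos i).le
  have hDpos : ∀ k, 0 < D k := fun k =>
    add_pos_of_pos_of_nonneg ht1
      (Finset.sum_nonneg fun i _ => add_nonneg (hΔpos i).le (hδpos i).le)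
  have hf0 : ∀ k, 0 ≤ f k := fun k => div_nonneg (hSnn k) (hDpos k).le
  have hf1 : ∀ k, f k ≤ 1 := by
    intro k
    rw [div_le_one (hDpos k)]
    have h1 : ∑ i ∈ Finset.range k, Δ i ≤ ∑ i ∈ Finset.range k, (Δ i + δ i) :=
      Finset.sum_le_sum fun i _ => by linarith [hδpos i]
    have hDeq : D k = t1 + ∑ i ∈ Finset.range k, (Δ i + δ i) := rfl
    linarith
  have hbdd_le : IsBoundedUnder (· ≤ ·) atTop f := isBoundedUnder_of ⟨1, hf1⟩
  have hbdd_ge : IsBoundedUnder (· ≥ ·) atTop f := isBoundedUnder_of ⟨0, hf0⟩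
  -- key arithmetic fact
  have hLV : pstar * δMAX ≤ (1 - pstar) * (L / VMIN) := by
    have hV' : VMIN * (pstar * δMAX) ≤ L * (1 - pstar) :=
      (le_div_iff₀ (by positivity)).mp hV
    rw [mul_div_assoc', le_div_iff₀ hVpos]
    nlinarith
  -- constant E
  set E : ℝ := (∑ i ∈ Finset.range k0, ((1 - pstar) * Δ i - pstar * δ i)) - pstar * t1 with hE
  -- key inequality
  have hkey : ∀ k, k0 ≤ k → pstar + E / D k ≤ f k := by
    intro k hk
    have hD := hDpos k
    have hsum : ∑ i ∈ Finset.range k0, ((1 - pstar) * Δ i - pstar * δ i) ≤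
        ∑ i ∈ Finset.range k, ((1 - pstar) * Δ i - pstar * δ i) := by
      apply Finset.sum_le_sum_of_subset_of_nonneg
      · exact Finset.range_subset_range.mpr hk
      · intro i hi hni
        have hik0 : k0 ≤ i := by
          by_contra h
          exact hni (Finset.mem_range.mpr (lt_of_not_ge h))
        rw [hΔeq i hik0]
        have := hδ i
        nlinarith [hδpos i]
    have hDeq : D k = t1 + ∑ i ∈ Finset.range k, (Δ i + δ i) := rfl
    have hgoal : pstar * D k + E ≤ ∑ i ∈ Finset.range k, Δ i := by
      have hg : ∑ i ∈ Finset.range k, ((1 - pstar) * Δ i - pstar * δ i) =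
          (1 - pstar) * ∑ i ∈ Finset.range k, Δ i -
            pstar * ∑ i ∈ Finset.range k, δ i := by
        rw [Finset.sum_sub_distrib, ← Finset.mul_sum, ← Finset.mul_sum]
      have hsplit : ∑ i ∈ Finset.range k, (Δ i + δ i) =
          ∑ i ∈ Finset.range k, Δ i + ∑ i ∈ Finset.range k, δ i :=
        Finset.sum_add_distrib
      rw [hg] at hsum
      rw [hE, hDeq, hsplit]
      nlinarith [hsum]
    calc pstar + E / D k = (pstar * D k + E) / D k := by field_simp
      _ ≤ (∑ i ∈ Finset.range k, Δ i) / D k := by gcongr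
      _ = f k := rfl
  -- D tends to atTop
  have hDtop : Tendsto D atTop atTop := by
    have haux : Tendsto (fun k : ℕ => t1 + ((k:ℝ) - k0) * (L / VMIN)) atTop atTop := by
      apply tendsto_atTop_add_const_left
      apply Tendsto.atTop_mul_const (by positivity : (0:ℝ) < L / VMIN)
      exact tendsto_atTop_add_const_right _ _ tendsto_natCast_atTop_atTop
    apply tendsto_atTop_mono' atTop _ haux
    filter_upwards [eventually_ge_atTop k0] with k hk
    have h1 : ((k:ℝ) - k0) * (L / VMIN) ≤ ∑ i ∈ Finset.range k, (Δ i + δ i) := by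
      have h2 : ∑ i ∈ Finset.Ico k0 k, (L / VMIN) ≤ ∑ i ∈ Finset.Ico k0 k, (Δ i + δ i) := by
        apply Finset.sum_le_sum
        intro i hi
        rw [hΔeq i (Finset.mem_Ico.mp hi).1]
        linarith [hδpos i]
      have h3 : ∑ i ∈ Finset.Ico k0 k, (Δ i + δ i) ≤ ∑ i ∈ Finset.range k, (Δ i + δ i) := by
        apply Finset.sum_le_sum_of_subset_of_nonneg
        · intro i hi
          exact Finset.mem_range.mpr (Finset.mem_Ico.mp hi).2
        · intro i _ _
          have := hΔpos i; have := hδpos i; linarith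
      rw [Finset.sum_const, Nat.card_Ico, nsmul_eq_mul] at h2
      have h4 : ((k:ℝ) - k0) = ((k - k0 : ℕ) : ℝ) := by
        rw [Nat.cast_sub hk]
      rw [h4]
      linarith
    simp only [hDdef]
    linarith
  -- auxiliary sequence tends to pstar
  have haux_tendsto : Tendsto (fun k => pstar + E / D k) atTop (nhds pstar) := by
    have : Tendsto (fun k => E / D k) atTop (nhds 0) :=
      Tendsto.div_atTop tendsto_const_nhds hDtop
    have := Tendsto.const_add pstar this
    simpa using this
  -- liminf bound
  have hliminf : pstar ≤ liminf f atTop := by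
    have h1 : liminf (fun k => pstar + E / D k) atTop = pstar := haux_tendsto.liminf_eq
    rw [← h1]
    apply liminf_le_liminf
    · filter_upwards [eventually_ge_atTop k0] with k hk using hkey k hk
    · exact haux_tendsto.isBoundedUnder_ge
    · exact hbdd_le.isCoboundedUnder_ge
  have hle : liminf f atTop ≤ limsup f atTop := liminf_le_limsup hbdd_le hbdd_ge
  by_cases h : pstar < limsup f atTop
  · refine Or.inr ⟨h, ?_⟩
    intro htend
    have := htend.limsup_eq
    rw [this] at h
    exact lt_irrefl _ h
  · push_neg at h
    have heq : limsup f atTop = pstar := le_antisymm h (le_trans hliminf hle)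
    have heq' : liminf f atTop = pstar := le_antisymm (heq ▸ hle) hliminf
    refine Or.inl ⟨tendsto_of_liminf_eq_limsup heq' heq hbdd_le hbdd_ge, ?_⟩
    rw [heq]
    exact lt_irrefl _
end

section
/- Let p* ∈ (0, 1), t_1 > 0, 0 < Δ_MIN ≤ Δ_MAX, and let (δ_j) satisfy 0 < δ_MIN ≤ δ_j ≤ δ_MAX < ∞ for all j, with Δ_MAX/(Δ_MAX + δ_MAX) ≥ p* and Δ_MIN/(Δ_MIN + δ_MIN) ≤ p*. Define the crossing times by the min-max rule: Δ_1 = Δ_MAX, and for k ≥ 2, Δ_k = Δ_MAX if p(t_{2k−1}) ≤ p* and Δ_k = Δ_MIN otherwise, where t_{2k} = t_1 + Σ_{i=1}^k Δ_i + Σ_{j=1}^{k−1} δ_j, t_{2k+1} = t_{2k} + δ_k, and p(t_j) = c(t_j)/t_j with c(t_{2k}) = c(t_{2k+1}) = Σ_{i=1}^k Δ_i. Let c : ℝ≥0 → ℝ be any nonnegative nondecreasing function agreeing with these values at the times t_j (coverage increases only during crossings). Then lim_{t→∞} c(t)/t = p*. -/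
open Filter

/-- Auxiliary: a sequence that increases by at most `M` when nonpositive and
decreases by at most `M` when positive stays bounded by `|e 1| + M`. -/
lemma minmax_aux_bound (M : ℝ) (e : ℕ → ℝ) (hM : 0 ≤ M)
    (hstep : ∀ k, 1 ≤ k →
      (e k ≤ 0 → e k ≤ e (k+1) ∧ e (k+1) ≤ e k + M) ∧
      (0 < e k → e (k+1) ≤ e k ∧ e k - M ≤ e (k+1))) :
    ∀ k, 1 ≤ k → |e k| ≤ |e 1| + M := by
  intro k hk
  induction k, hk using Nat.le_induction with
  | base => linarith [abs_nonneg (e 1)]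
  | succ k hk ih =>
    obtain ⟨h1, h2⟩ := hstep k hk
    rw [abs_le] at ih ⊢
    rcases le_or_gt (e k) 0 with h | h
    · obtain ⟨a, b⟩ := h1 h
      exact ⟨by linarith, by linarith [abs_nonneg (e 1)]⟩
    · obtain ⟨a, b⟩ := h2 h
      exact ⟨by linarith [abs_nonneg (e 1)], by linarith⟩

/-- Theorem 2: Under the min-max velocity profile (`Δ₁ = Δ_MAX`;
for `k ≥ 2`, `Δ_k = Δ_MAX` if `p(t_{2k−1}) = c(t_{2k−1})/t_{2k−1} ≤ p*` and
`Δ_k = Δ_MIN` otherwise), with `t_{2k} = t₁ + Σ_{i=1}^k Δ_i + Σ_{j=1}^{k−1} δ_j`,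
`t_{2k+1} = t_{2k} + δ_k`, `c(t_{2k}) = c(t_{2k+1}) = Σ_{i=1}^k Δ_i`, bounded gaps,
and the speed conditions `Δ_MAX/(Δ_MAX + δ_MAX) ≥ p*`,
`Δ_MIN/(Δ_MIN + δ_MIN) ≤ p*`, any nonnegative nondecreasing covered-time function
`c` agreeing with these values satisfies `c(t)/t → p*` as `t → ∞`. -/
theorem minmax_uniform_coverage
    (pstar t1 ΔMIN ΔMAX δMIN δMAX : ℝ)
    (hp : pstar ∈ Set.Ioo (0 : ℝ) 1) (ht1 : 0 < t1)
    (hΔMIN : 0 < ΔMIN) (hΔle : ΔMIN ≤ ΔMAX)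
    (hδMIN : 0 < δMIN) (hδle : δMIN ≤ δMAX)
    (δ : ℕ → ℝ) (hδ : ∀ j, δMIN ≤ δ j ∧ δ j ≤ δMAX)
    (hmax : ΔMAX / (ΔMAX + δMAX) ≥ pstar)
    (hmin : ΔMIN / (ΔMIN + δMIN) ≤ pstar)
    (Δ : ℕ → ℝ) (t : ℕ → ℝ) (c : ℝ → ℝ)
    (hΔ1 : Δ 1 = ΔMAX)
    (ht_one : t 1 = t1)
    (ht_even : ∀ k, 1 ≤ k →
      t (2 * k) = t1 + ∑ i ∈ Finset.Icc 1 k, Δ i + ∑ j ∈ Finset.Icc 1 (k - 1), δ j)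
    (ht_odd : ∀ k, 1 ≤ k → t (2 * k + 1) = t (2 * k) + δ k)
    (hΔk : ∀ k, 2 ≤ k →
      Δ k = if c (t (2 * k - 1)) / t (2 * k - 1) ≤ pstar then ΔMAX else ΔMIN)
    (hc_even : ∀ k, 1 ≤ k → c (t (2 * k)) = ∑ i ∈ Finset.Icc 1 k, Δ i)
    (hc_odd : ∀ k, 1 ≤ k → c (t (2 * k + 1)) = ∑ i ∈ Finset.Icc 1 k, Δ i)
    (hc_nonneg : ∀ x, 0 ≤ x → 0 ≤ c x)
    (hc_mono : MonotoneOn c (Set.Ici (0 : ℝ))) :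
    Tendsto (fun x => c x / x) atTop (nhds pstar) := by
  classical
  obtain ⟨hp0, hp1⟩ := hp
  have hΔMAX : 0 < ΔMAX := lt_of_lt_of_le hΔMIN hΔle
  have hδMAX : 0 < δMAX := lt_of_lt_of_le hδMIN hδle
  have hMpos : 0 < ΔMAX + δMAX := by linarith
  have hmpos : 0 < ΔMIN + δMIN := by linarith
  have hmax' : pstar * (ΔMAX + δMAX) ≤ ΔMAX := by
    rw [ge_iff_le, le_div_iff₀ hMpos] at hmax; linarith
  have hmin' : ΔMIN ≤ pstar * (ΔMIN + δMIN) := by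
    rw [div_le_iff₀ hmpos] at hmin; linarith
  have hΔbd : ∀ i, 1 ≤ i → ΔMIN ≤ Δ i ∧ Δ i ≤ ΔMAX := by
    intro i hi
    rcases eq_or_lt_of_le hi with h | h
    · rw [← h, hΔ1]; exact ⟨hΔle, le_rfl⟩
    · rw [hΔk i h]; split
      · exact ⟨hΔle, le_rfl⟩
      · exact ⟨le_rfl, hΔle⟩
  set S : ℕ → ℝ := fun k => ∑ i ∈ Finset.Icc 1 k, Δ i with hSdef
  set D : ℕ → ℝ := fun k => ∑ j ∈ Finset.Icc 1 k, δ j with hDdef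
  set u : ℕ → ℝ := fun k => t1 + S k + D k with hudef
  have hSfold : ∀ k, (∑ i ∈ Finset.Icc 1 k, Δ i) = S k := fun _ => rfl
  have hDfold : ∀ k, (∑ j ∈ Finset.Icc 1 k, δ j) = D k := fun _ => rfl
  have hSsucc : ∀ k, S (k+1) = S k + Δ (k+1) := fun k =>
    Finset.sum_Icc_succ_top (by omega) Δ
  have hDsucc : ∀ k, D (k+1) = D k + δ (k+1) := fun k =>
    Finset.sum_Icc_succ_top (by omega) δ
  have hSnn : ∀ k, 0 ≤ S k := by
    intro k
    apply Finset.sum_nonneg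
    intro i hi
    have := (hΔbd i (Finset.mem_Icc.mp hi).1).1
    linarith
  have hDnn : ∀ k, 0 ≤ D k := by
    intro k
    apply Finset.sum_nonneg
    intro j _
    linarith [(hδ j).1]
  have hupos : ∀ k, 0 < u k := by
    intro k
    have h1 := hSnn k; have h2 := hDnn k
    simp only [hudef]; linarith
  have hu_odd : ∀ k, 1 ≤ k → t (2*k+1) = u k := by
    intro k hk
    obtain ⟨m, rfl⟩ : ∃ m, k = m + 1 := ⟨k - 1, by omega⟩
    rw [ht_odd _ (by omega), ht_even _ (by omega)]
    have hm1 : m + 1 - 1 = m := by omega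
    rw [hm1, hSfold, hDfold]
    simp only [hudef]
    rw [hDsucc]
    ring
  have husucc : ∀ k, u (k+1) = u k + (Δ (k+1) + δ (k+1)) := by
    intro k; simp only [hudef]; rw [hSsucc, hDsucc]; ring
  have hgap_lb : ∀ k, ΔMIN + δMIN ≤ Δ (k+1) + δ (k+1) := by
    intro k
    have h1 := (hΔbd (k+1) (by omega)).1
    have h2 := (hδ (k+1)).1
    linarith
  have hgap_ub : ∀ k, Δ (k+1) + δ (k+1) ≤ ΔMAX + δMAX := by
    intro k
    have h1 := (hΔbd (k+1) (by omega)).2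
    have h2 := (hδ (k+1)).2
    linarith
  set e : ℕ → ℝ := fun k => S k - pstar * u k with hedef
  have hestep : ∀ k, 1 ≤ k →
      (e k ≤ 0 → e k ≤ e (k+1) ∧ e (k+1) ≤ e k + (ΔMAX + δMAX)) ∧
      (0 < e k → e (k+1) ≤ e k ∧ e k - (ΔMAX + δMAX) ≤ e (k+1)) := by
    intro k hk
    have h2k : 2*(k+1) - 1 = 2*k + 1 := by omega
    have hcond : (c (t (2*(k+1) - 1)) / t (2*(k+1) - 1) ≤ pstar) ↔ e k ≤ 0 := by
      rw [h2k, hc_odd k hk, hSfold, hu_odd k hk, div_le_iff₀ (hupos k)]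
      simp only [hedef]
      constructor <;> intro h <;> linarith
    have herec : e (k+1) = e k + (Δ (k+1) - pstar * (Δ (k+1) + δ (k+1))) := by
      simp only [hedef]
      rw [husucc, hSsucc]
      ring
    have hδk1 := hδ (k+1)
    constructor
    · intro hneg
      have hsel : Δ (k+1) = ΔMAX := by
        rw [hΔk (k+1) (by omega), if_pos (hcond.mpr hneg)]
      have hprod : pstar * (ΔMAX + δ (k+1)) ≤ pstar * (ΔMAX + δMAX) :=
        mul_le_mul_of_nonneg_left (by linarith [hδk1.2]) hp0.le
      have hprod0 : 0 ≤ pstar * (ΔMAX + δ (k+1)) :=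
        mul_nonneg hp0.le (by linarith [hδk1.1])
      rw [herec, hsel]
      constructor
      · linarith
      · linarith
    · intro hposi
      have hsel : Δ (k+1) = ΔMIN := by
        rw [hΔk (k+1) (by omega),
          if_neg (fun h => absurd (hcond.mp h) (not_le.mpr hposi))]
      have hprod : pstar * (ΔMIN + δMIN) ≤ pstar * (ΔMIN + δ (k+1)) :=
        mul_le_mul_of_nonneg_left (by linarith [hδk1.1]) hp0.le
      have hprod1 : pstar * (ΔMIN + δ (k+1)) ≤ ΔMIN + δ (k+1) := by
        nlinarith [hδk1.1]
      rw [herec, hsel]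
      constructor
      · linarith
      · linarith [hδk1.2]
  have hebd := minmax_aux_bound (ΔMAX + δMAX) e hMpos.le hestep
  set B := |e 1| + (ΔMAX + δMAX) with hBdef
  have hBnn : 0 ≤ B := by
    have := abs_nonneg (e 1); simp only [hBdef]; linarith
  have humono : ∀ k, u k < u (k+1) := by
    intro k
    rw [husucc]
    have := hgap_lb k
    linarith
  have hcover : ∀ x, u 1 ≤ x → ∃ k, 1 ≤ k ∧ u k ≤ x ∧ x < u (k+1) := by
    intro x hx
    have hex : ∃ m, x < u m := by
      have hS_lb : ∀ m : ℕ, (m : ℝ) * ΔMIN ≤ S m := by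
        intro m
        calc (m:ℝ) * ΔMIN = ∑ _i ∈ Finset.Icc 1 m, ΔMIN := by
              rw [Finset.sum_const, Nat.card_Icc, Nat.add_sub_cancel, nsmul_eq_mul]
          _ ≤ S m := Finset.sum_le_sum fun i hi => (hΔbd i (Finset.mem_Icc.mp hi).1).1
      obtain ⟨m, hm⟩ := exists_nat_gt (x / ΔMIN)
      refine ⟨m, ?_⟩
      have hx' : x < (m:ℝ) * ΔMIN := by
        rw [div_lt_iff₀ hΔMIN] at hm; linarith
      have h1 := hS_lb m; have h2 := hDnn m
      simp only [hudef]; linarith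
    have hm : x < u (Nat.find hex) := Nat.find_spec hex
    have hm2 : 2 ≤ Nat.find hex := by
      by_contra h
      have hcase : Nat.find hex = 0 ∨ Nat.find hex = 1 := by omega
      rcases hcase with h0 | h1
      · rw [h0] at hm
        exact absurd hm (not_lt.mpr (le_trans (humono 0).le hx))
      · rw [h1] at hm
        exact absurd hm (not_lt.mpr hx)
    refine ⟨Nat.find hex - 1, by omega, ?_, ?_⟩
    · exact not_lt.mp (Nat.find_min hex (show Nat.find hex - 1 < Nat.find hex by omega))
    · have hfix : Nat.find hex - 1 + 1 = Nat.find hex := by omega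
      rw [hfix]; exact hm
  have hCbd : ∀ x, u 1 ≤ x → |c x - pstar * x| ≤ B + (ΔMAX + δMAX) := by
    intro x hx
    obtain ⟨k, hk1, hkx, hxk⟩ := hcover x hx
    have hxnn : (0:ℝ) ≤ x := le_trans (hupos 1).le hx
    have h1 : c (u k) ≤ c x :=
      hc_mono (Set.mem_Ici.mpr (hupos k).le) (Set.mem_Ici.mpr hxnn) hkx
    have h2 : c x ≤ c (u (k+1)) :=
      hc_mono (Set.mem_Ici.mpr hxnn) (Set.mem_Ici.mpr (hupos (k+1)).le) hxk.le
    have hck : c (u k) = S k := by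
      rw [← hu_odd k hk1, hc_odd k hk1, hSfold]
    have hck1 : c (u (k+1)) = S (k+1) := by
      rw [← hu_odd (k+1) (by omega), hc_odd (k+1) (by omega), hSfold]
    have e1 : |e k| ≤ B := hebd k hk1
    have e2 : |e (k+1)| ≤ B := hebd (k+1) (by omega)
    have he_k : e k = S k - pstar * u k := by simp only [hedef]
    have he_k1 : e (k+1) = S (k+1) - pstar * u (k+1) := by simp only [hedef]
    rw [he_k] at e1
    rw [he_k1] at e2
    rw [abs_le] at e1 e2 ⊢
    rw [hck] at h1
    rw [hck1] at h2
    have hg1 := husucc k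
    have hg2 := hgap_ub k
    have hg3 := hgap_lb k
    have hpx1 : pstar * u k ≤ pstar * x := mul_le_mul_of_nonneg_left hkx hp0.le
    have hpx2 : pstar * x ≤ pstar * u (k+1) := mul_le_mul_of_nonneg_left hxk.le hp0.le
    have hpg0 : 0 ≤ pstar * (u (k+1) - u k) :=
      mul_nonneg hp0.le (by linarith)
    have hpg1 : pstar * (u (k+1) - u k) ≤ u (k+1) - u k :=
      mul_le_of_le_one_left (by linarith) hp1.le
    constructor
    · linarith
    · linarith
  have hg0 : Tendsto (fun x : ℝ => (B + (ΔMAX + δMAX)) / x) atTop (nhds 0) :=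
    tendsto_const_nhds.div_atTop tendsto_id
  rw [tendsto_iff_norm_sub_tendsto_zero]
  refine squeeze_zero' (Eventually.of_forall fun x => norm_nonneg _) ?_ hg0
  filter_upwards [eventually_ge_atTop (u 1), eventually_gt_atTop (0:ℝ)] with x hx hx0
  rw [Real.norm_eq_abs]
  have hrw : c x / x - pstar = (c x - pstar * x) / x := by
    field_simp
  rw [hrw, abs_div, abs_of_pos hx0]
  exact div_le_div_of_nonneg_right (hCbd x hx) hx0.le
end
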